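/- For all planar binary trees x and y, one has P_{x∖y} = P_x * P_y and P_{x/y} = P_x / P_y in ℤY. -/

import Mathlib

/-- A planar binary tree: either the trivial tree (a leaf) or an ordered pair of
planar binary trees. -/
inductive PBT : Type
  | leaf : PBT
  | node : PBT → PBT → PBT
  deriving DecidableEq

namespace PBT

/-- Number of internal vertices of a planar binary tree. -/
def size : PBT → ℕ
  | leaf => 0
  | node a b => a.size + b.size + 1

/-- One covering move of the Tamari order: `Rot x y` holds when `y` is obtained
from `x` by replacing some subtree of the form `((a,b),c)` by `(a,(b,c))`. -/
inductive Rot : PBT → PBT → Prop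
  | rot (a b c : PBT) : Rot (node (node a b) c) (node a (node b c))
  | left {a a' : PBT} (b : PBT) : Rot a a' → Rot (node a b) (node a' b)
  | right (a : PBT) {b b' : PBT} : Rot b b' → Rot (node a b) (node a b')

/-- The Tamari order: reflexive-transitive closure of `Rot`. -/
def tle (x y : PBT) : Prop := Relation.ReflTransGen Rot x y

/-- Grafting of `x` on the leftmost leaf of `y` : the operation `x / y`. -/
def _root_.PBT.over : PBT → PBT → PBT
  | x, leaf => x
  | x, node y₁ y₂ => node (PBT.over x y₁) y₂

/-- Grafting of `y` on the rightmost leaf of `x` : the operation `x ∖ y`. -/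
def under : PBT → PBT → PBT
  | leaf, y => y
  | node x₁ x₂, y => node x₁ (under x₂ y)

theorem Rot.size_eq {x y : PBT} (h : Rot x y) : x.size = y.size := by
  induction h <;> simp [size] <;> omega

theorem tle.size_eq {x y : PBT} (h : tle x y) : x.size = y.size := by
  induction h with
  | refl => rfl
  | tail _ h ih => rw [ih, h.size_eq]

theorem finite_size_le (n : ℕ) : {z : PBT | z.size ≤ n}.Finite := by
  induction n with
  | zero =>
    apply Set.Finite.subset (Set.finite_singleton leaf)
    rintro (_ | ⟨a, b⟩) hz
    · simp
    · simp [size] at hz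
  | succ n ih =>
    apply Set.Finite.subset ((Set.Finite.image2 node ih ih).insert leaf)
    rintro (_ | ⟨a, b⟩) hz
    · simp
    · simp only [Set.mem_setOf_eq, size] at hz
      exact Set.mem_insert_iff.mpr
        (Or.inr (Set.mem_image2.mpr ⟨a, by simp only [Set.mem_setOf_eq]; omega, b, by simp only [Set.mem_setOf_eq]; omega, rfl⟩))

theorem finite_size (n : ℕ) : {z : PBT | z.size = n}.Finite :=
  (finite_size_le n).subset fun _ hz => le_of_eq hz

theorem finite_tle_right (x : PBT) : {y : PBT | tle y x}.Finite :=
  (finite_size x.size).subset fun _ hy => hy.size_eq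

theorem finite_tle_left (x : PBT) : {y : PBT | tle x y}.Finite :=
  (finite_size x.size).subset fun _ hy => hy.size_eq.symm

theorem finite_interval (x y : PBT) :
    {z : PBT | tle (PBT.over x y) z ∧ tle z (under x y)}.Finite :=
  (finite_tle_right (under x y)).subset fun _ hz => hz.2

end PBT

/-- The free abelian group `ℤY = ⊕ₙ ℤYₙ` on the set of all planar binary trees. -/
abbrev ZY : Type := PBT →₀ ℤ

namespace PBT

/-- The basis element `S_x` of `ℤY`. -/
noncomputable def S (x : PBT) : ZY := Finsupp.single x 1

/-- The class `P_x = ∑_{y ≤ x} S_y` of the projective module. -/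
noncomputable def P (x : PBT) : ZY := ∑ y ∈ (finite_tle_right x).toFinset, S y

/-- The class `I_x = ∑_{y ≥ x} S_y` of the injective module. -/
noncomputable def I (x : PBT) : ZY := ∑ y ∈ (finite_tle_left x).toFinset, S y

/-- The Loday-Ronco product on basis elements:
`S_x * S_y = ∑_{x/y ≤ z ≤ x∖y} S_z`. -/
noncomputable def starB (x y : PBT) : ZY := ∑ z ∈ (finite_interval x y).toFinset, S z

/-- Bilinear extension of a product defined on basis elements. -/
noncomputable def bilin (f : PBT → PBT → ZY) (a b : ZY) : ZY :=
  a.sum fun x ax => b.sum fun y byy => (ax * byy) • f x y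

/-- The product `/` on `ℤY`, with `S_x / S_y = S_{x/y}`. -/
noncomputable def overM : ZY → ZY → ZY := bilin fun x y => S (x.over y)

/-- The product `∖` on `ℤY`, with `S_x ∖ S_y = S_{x∖y}`. -/
noncomputable def underM : ZY → ZY → ZY := bilin fun x y => S (x.under y)

/-- The Loday-Ronco product `*` on `ℤY`. -/
noncomputable def starM : ZY → ZY → ZY := bilin starB

/-- The unique planar binary tree `•` with one internal vertex. -/
def dot : PBT := node leaf leaf

end PBT

/-!
Cutting a tree `z` along the path from its `m`-th leaf to the root gives a pair `(u, v)` with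
`u / v ≤ z ≤ u ∖ v`; the cut is monotone for the Tamari order and, for `u.size = m`, recovers `(u, v)`
from both `u / v` and `u ∖ v`. Since the Tamari order is antisymmetric (a rotation decreases the
total size of left subtrees), a tree `z ≤ x ∖ y` lies in exactly one interval `[u / v, u ∖ v]`
with `u ≤ x`, `v ≤ y`, namely the one given by cutting `z` at `x.size`; this is
`P_{x∖y} = P_x * P_y`. The trees below `x / y` are `u / v`-shaped with `u.size = x.size`, so the
same cut identifies them with the pairs `u ≤ x`, `v ≤ y`; this is `P_{x/y} = P_x / P_y`.
-/

namespace PBT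

@[simp] lemma size_node (a b : PBT) : size (node a b) = a.size + b.size + 1 := rfl
@[simp] lemma over_leaf (x : PBT) : x.over leaf = x := rfl
@[simp] lemma over_node (x y₁ y₂ : PBT) : x.over (node y₁ y₂) = node (x.over y₁) y₂ := rfl
@[simp] lemma under_node (x₁ x₂ y : PBT) : (node x₁ x₂).under y = node x₁ (x₂.under y) := rfl

lemma size_over (x y : PBT) : (x.over y).size = x.size + y.size := by
  induction y with
  | leaf => rfl
  | node a b iha _ => simp only [over_node, size_node, iha]; omega

lemma tle.refl (x : PBT) : tle x x := Relation.ReflTransGen.refl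

lemma tle.trans {x y z : PBT} (h₁ : tle x y) (h₂ : tle y z) : tle x z :=
  Relation.ReflTransGen.trans h₁ h₂

lemma Rot.tle {x y : PBT} (h : Rot x y) : tle x y := Relation.ReflTransGen.single h

lemma tle.map (f : PBT → PBT) (hf : ∀ ⦃a b⦄, Rot a b → Rot (f a) (f b)) {x y : PBT}
    (h : tle x y) : tle (f x) (f y) :=
  Relation.ReflTransGen.lift f hf x y h

lemma tle.node_left {a a' : PBT} (b : PBT) (h : tle a a') : tle (node a b) (node a' b) :=
  h.map (node · b) fun _ _ => Rot.left b

lemma tle.node_right (a : PBT) {b b' : PBT} (h : tle b b') : tle (node a b) (node a b') :=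
  h.map (node a) fun _ _ => Rot.right a

lemma Rot.under_left {u u' : PBT} (h : Rot u u') (v : PBT) : Rot (u.under v) (u'.under v) := by
  induction h with
  | rot a b c => exact Rot.rot a b (c.under v)
  | left b h _ => exact Rot.left _ h
  | right a _ ih => exact Rot.right a ih

lemma Rot.under_right (u : PBT) {v v' : PBT} (h : Rot v v') : Rot (u.under v) (u.under v') := by
  induction u with
  | leaf => exact h
  | node a _ _ ih => exact Rot.right a ih

lemma Rot.over_left {u u' : PBT} (h : Rot u u') (v : PBT) : Rot (u.over v) (u'.over v) := by
  induction v with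
  | leaf => exact h
  | node _ b ih _ => exact Rot.left b ih

lemma Rot.over_right (u : PBT) {v v' : PBT} (h : Rot v v') : Rot (u.over v) (u.over v') := by
  induction h with
  | rot a b c => exact Rot.rot (u.over a) b c
  | left b _ ih => exact Rot.left b ih
  | right a h _ => exact Rot.right _ h

lemma tle.under {u u' v v' : PBT} (hu : tle u u') (hv : tle v v') :
    tle (u.under v) (u'.under v') :=
  (hu.map (·.under v) fun _ _ h => h.under_left v).trans
    (hv.map u'.under fun _ _ => Rot.under_right u')

lemma tle.over {u u' v v' : PBT} (hu : tle u u') (hv : tle v v') :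
    tle (u.over v) (u'.over v') :=
  (hu.map (·.over v) fun _ _ h => h.over_left v).trans
    (hv.map u'.over fun _ _ => Rot.over_right u')

def leftWeight : PBT → ℕ
  | leaf => 0
  | node a b => a.leftWeight + b.leftWeight + a.size

lemma Rot.leftWeight_lt {x y : PBT} (h : Rot x y) : y.leftWeight < x.leftWeight := by
  induction h with
  | rot a b c => simp only [leftWeight, size_node]; omega
  | left b h ih => simp only [leftWeight, h.size_eq] at *; omega
  | right a _ ih => simp only [leftWeight] at *; omega

lemma tle.eq_or_leftWeight_lt {x y : PBT} (h : tle x y) : x = y ∨ y.leftWeight < x.leftWeight := by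
  induction h with
  | refl => exact Or.inl rfl
  | tail _ hr ih =>
    rcases ih with rfl | ih
    · exact Or.inr hr.leftWeight_lt
    · exact Or.inr (hr.leftWeight_lt.trans ih)

lemma tle.antisymm {x y : PBT} (h₁ : tle x y) (h₂ : tle y x) : x = y := by
  rcases h₁.eq_or_leftWeight_lt with rfl | lt₁
  · rfl
  rcases h₂.eq_or_leftWeight_lt with rfl | lt₂
  · rfl
  omega

/-- Cutting `z` along the path from its `m`-th leaf (counted from `0` on the left) to the root.
For `u.size = m`, both `u / v` and `u ∖ v` are cut into `(u, v)`. -/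
def split : ℕ → PBT → PBT × PBT
  | _, leaf => (leaf, leaf)
  | m, node a b =>
    if m ≤ a.size then ((split m a).1, node (split m a).2 b)
    else (node a (split (m - a.size - 1) b).1, (split (m - a.size - 1) b).2)

lemma split_node_of_le {m : ℕ} {a : PBT} (b : PBT) (h : m ≤ a.size) :
    split m (node a b) = ((split m a).1, node (split m a).2 b) := by
  simp only [split, if_pos h]

lemma split_node_of_lt {m : ℕ} {a : PBT} (b : PBT) (h : a.size < m) :
    split m (node a b) = (node a (split (m - a.size - 1) b).1, (split (m - a.size - 1) b).2) := by
  simp only [split, if_neg h.not_ge]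

lemma split_of_size_le {m : ℕ} {z : PBT} (h : z.size ≤ m) : split m z = (z, leaf) := by
  induction z generalizing m with
  | leaf => rfl
  | node a b _ ihb =>
    rw [size_node] at h
    rw [split_node_of_lt b (by omega), ihb (by omega)]

lemma split_zero (z : PBT) : split 0 z = (leaf, z) := by
  induction z with
  | leaf => rfl
  | node a b iha _ => rw [split_node_of_le b (Nat.zero_le _), iha]

lemma split_over (u v : PBT) : split u.size (u.over v) = (u, v) := by
  induction v with
  | leaf => exact split_of_size_le le_rfl
  | node v₁ v₂ ih _ => rw [over_node, split_node_of_le v₂ (by rw [size_over]; omega), ih]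

lemma split_under (u v : PBT) : split u.size (u.under v) = (u, v) := by
  induction u with
  | leaf => exact split_zero v
  | node u₁ u₂ _ ih =>
    rw [under_node, split_node_of_lt _ (by simp)]
    simp only [size_node, show u₁.size + u₂.size + 1 - u₁.size - 1 = u₂.size by omega, ih]

lemma node_under_tle (x w b : PBT) : tle (node (x.under w) b) (x.under (node w b)) := by
  induction x with
  | leaf => exact tle.refl _
  | node x₁ x₂ _ ih => exact (Rot.rot x₁ (x₂.under w) b).tle.trans (ih.node_right x₁)

lemma over_node_tle (a w v : PBT) : tle ((node a w).over v) (node a (w.over v)) := by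
  induction v with
  | leaf => exact tle.refl _
  | node v₁ v₂ ih _ => exact (ih.node_left v₂).trans (Rot.rot a (w.over v₁) v₂).tle

lemma over_split_tle_and_tle_under_split (m : ℕ) (z : PBT) :
    tle ((split m z).1.over (split m z).2) z ∧ tle z ((split m z).1.under (split m z).2) := by
  induction z generalizing m with
  | leaf => exact ⟨tle.refl _, tle.refl _⟩
  | node a b iha ihb =>
    by_cases h : m ≤ a.size
    · rw [split_node_of_le b h]
      exact ⟨(iha m).1.node_left b, ((iha m).2.node_left b).trans (node_under_tle _ _ _)⟩
    · rw [split_node_of_lt b (by omega)]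
      obtain ⟨h₁, h₂⟩ := ihb (m - a.size - 1)
      exact ⟨(over_node_tle a _ _).trans (h₁.node_right a), h₂.node_right a⟩

lemma Rot.split_tle {z z' : PBT} (h : Rot z z') (m : ℕ) :
    PBT.tle (split m z).1 (split m z').1 ∧ PBT.tle (split m z).2 (split m z').2 := by
  induction h generalizing m with
  | rot a b c =>
    rcases le_or_gt m a.size with ha | ha
    · rw [split_node_of_le c (show m ≤ (node a b).size by simp; omega), split_node_of_le b ha,
        split_node_of_le (node b c) ha]
      exact ⟨tle.refl _, (Rot.rot _ b c).tle⟩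
    rcases le_or_gt m (a.size + b.size + 1) with hb | hb
    · rw [split_node_of_le c (show m ≤ (node a b).size from hb), split_node_of_lt b ha,
        split_node_of_lt (node b c) ha, split_node_of_le c (by omega)]
      exact ⟨tle.refl _, tle.refl _⟩
    · rw [split_node_of_lt c (show (node a b).size < m from hb), split_node_of_lt (node b c) ha,
        split_node_of_lt c (by omega)]
      simp only [size_node, show m - (a.size + b.size + 1) - 1 = m - a.size - 1 - b.size - 1 by omega]
      exact ⟨(Rot.rot a b _).tle, tle.refl _⟩
  | @left a a' b h ih =>
    rcases le_or_gt m a.size with ha | ha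
    · rw [split_node_of_le b ha, split_node_of_le b (h.size_eq ▸ ha)]
      exact ⟨(ih m).1, (ih m).2.node_left b⟩
    · rw [split_node_of_lt b ha, split_node_of_lt b (h.size_eq ▸ ha), ← h.size_eq]
      exact ⟨(Rot.left _ h).tle, tle.refl _⟩
  | @right a b b' h ih =>
    rcases le_or_gt m a.size with ha | ha
    · rw [split_node_of_le b ha, split_node_of_le b' ha]
      exact ⟨tle.refl _, (Rot.right _ h).tle⟩
    · rw [split_node_of_lt b ha, split_node_of_lt b' ha]
      exact ⟨(ih _).1.node_right a, (ih _).2⟩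

lemma tle.split {z z' : PBT} (h : tle z z') (m : ℕ) :
    tle (split m z).1 (split m z').1 ∧ tle (split m z).2 (split m z').2 := by
  induction h with
  | refl => exact ⟨tle.refl _, tle.refl _⟩
  | tail _ hr ih =>
    obtain ⟨h₁, h₂⟩ := hr.split_tle m
    exact ⟨ih.1.trans h₁, ih.2.trans h₂⟩

lemma split_eq_of_over_tle_of_tle_under {u v z : PBT} (h₁ : tle (u.over v) z)
    (h₂ : tle z (u.under v)) : split u.size z = (u, v) := by
  have lower := h₁.split u.size
  have upper := h₂.split u.size
  rw [split_over] at lower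
  rw [split_under] at upper
  exact Prod.ext (upper.1.antisymm lower.1) (upper.2.antisymm lower.2)

/-- `IsLeftGraft m z` says that some vertex on the leftmost branch of `z`, its leftmost leaf
included, is the root of a subtree of size `m`; equivalently, `z = u / v` with `u.size = m`. -/
def IsLeftGraft (m : ℕ) : PBT → Prop
  | leaf => m = 0
  | node a b => m = (node a b).size ∨ (m ≤ a.size ∧ IsLeftGraft m a)

lemma isLeftGraft_size (z : PBT) : IsLeftGraft z.size z := by
  cases z with
  | leaf => rfl
  | node a b => exact Or.inl rfl

lemma isLeftGraft_over (u v : PBT) : IsLeftGraft u.size (u.over v) := by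
  induction v with
  | leaf => exact isLeftGraft_size u
  | node _ _ ih _ => exact Or.inr ⟨by rw [size_over]; omega, ih⟩

lemma Rot.isLeftGraft {z z' : PBT} (h : Rot z z') {m : ℕ} (hz' : IsLeftGraft m z') :
    IsLeftGraft m z := by
  induction h with
  | rot a b c =>
    rcases hz' with hm | ⟨hm, ha⟩
    · exact Or.inl (by simp only [size_node] at hm ⊢; omega)
    · exact Or.inr ⟨by simp only [size_node]; omega, Or.inr ⟨hm, ha⟩⟩
  | left b h ih =>
    rcases hz' with hm | ⟨hm, ha⟩
    · exact Or.inl (by simp only [size_node] at hm ⊢; rw [hm, h.size_eq])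
    · exact Or.inr ⟨h.size_eq ▸ hm, ih ha⟩
  | right a h _ =>
    rcases hz' with hm | hm
    · exact Or.inl (by simp only [size_node] at hm ⊢; rw [hm, h.size_eq])
    · exact Or.inr hm

lemma tle.isLeftGraft {z z' : PBT} (h : tle z z') {m : ℕ} (hz' : IsLeftGraft m z') :
    IsLeftGraft m z := by
  induction h with
  | refl => exact hz'
  | tail _ hr ih => exact ih (hr.isLeftGraft hz')

lemma IsLeftGraft.over_split {m : ℕ} {z : PBT} (hz : IsLeftGraft m z) :
    (split m z).1.over (split m z).2 = z := by
  induction z with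
  | leaf => rfl
  | node a b iha _ =>
    rcases hz with hm | ⟨hm, ha⟩
    · rw [split_of_size_le hm.ge, over_leaf]
    · rw [split_node_of_le b hm, over_node, iha ha]

noncomputable def Iic (x : PBT) : Finset PBT := (finite_tle_right x).toFinset

lemma mem_Iic {x z : PBT} : z ∈ Iic x ↔ tle z x := Set.Finite.mem_toFinset _

lemma P_eq_sum_Iic (x : PBT) : P x = ∑ z ∈ Iic x, S z := rfl

lemma mem_interval {x y z : PBT} :
    z ∈ (finite_interval x y).toFinset ↔ tle (x.over y) z ∧ tle z (x.under y) :=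
  Set.Finite.mem_toFinset _

lemma bilin_sum_S_sum_S (f : PBT → PBT → ZY) (s t : Finset PBT) :
    bilin f (∑ u ∈ s, S u) (∑ v ∈ t, S v) = ∑ u ∈ s, ∑ v ∈ t, f u v := by
  have sum_S {g : PBT → ℤ → ZY} (g_zero : ∀ a, g a 0 = 0)
      (g_add : ∀ a c₁ c₂, g a (c₁ + c₂) = g a c₁ + g a c₂) (s : Finset PBT) :
      (∑ u ∈ s, S u).sum g = ∑ u ∈ s, g u 1 := by
    rw [← Finsupp.sum_finsetSum_index g_zero g_add]
    exact Finset.sum_congr rfl fun u _ => Finsupp.sum_single_index (g_zero u)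
  rw [bilin, sum_S (by simp) (by simp [add_mul, add_smul, Finsupp.sum_add])]
  refine Finset.sum_congr rfl fun u _ => ?_
  rw [sum_S (by simp) (by simp [mul_add, add_smul])]
  simp

lemma bilin_P_P (f : PBT → PBT → ZY) (x y : PBT) :
    bilin f (P x) (P y) = ∑ p ∈ Iic x ×ˢ Iic y, f p.1 p.2 := by
  rw [Finset.sum_product]
  exact bilin_sum_S_sum_S f _ _

lemma P_under (x y : PBT) : P (x.under y) = starM (P x) (P y) := by
  have maps_to (z) (hz : z ∈ Iic (x.under y)) : split x.size z ∈ Iic x ×ˢ Iic y := by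
    have := (mem_Iic.mp hz).split x.size
    rw [split_under] at this
    exact Finset.mem_product.mpr ⟨mem_Iic.mpr this.1, mem_Iic.mpr this.2⟩
  have fiber (p) (hp : p ∈ Iic x ×ˢ Iic y) :
      {z ∈ Iic (x.under y) | split x.size z = p} = (finite_interval p.1 p.2).toFinset := by
    obtain ⟨hu, hv⟩ := Finset.mem_product.mp hp
    have hsize : p.1.size = x.size := (mem_Iic.mp hu).size_eq
    ext z
    rw [Finset.mem_filter, mem_Iic, mem_interval]
    constructor
    · rintro ⟨-, rfl⟩
      rw [← hsize] at *
      exact over_split_tle_and_tle_under_split _ z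
    · rintro ⟨h₁, h₂⟩
      refine ⟨h₂.trans ((mem_Iic.mp hu).under (mem_Iic.mp hv)), ?_⟩
      rw [← hsize]
      exact split_eq_of_over_tle_of_tle_under h₁ h₂
  rw [starM, bilin_P_P, P_eq_sum_Iic, ← Finset.sum_fiberwise_of_maps_to maps_to]
  exact Finset.sum_congr rfl fun p hp => by rw [fiber p hp]; rfl

lemma P_over (x y : PBT) : P (x.over y) = overM (P x) (P y) := by
  have image_eq : Iic (x.over y) = (Iic x ×ˢ Iic y).image fun p => p.1.over p.2 := by
    ext z
    rw [Finset.mem_image, mem_Iic]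
    constructor
    · intro hz
      refine ⟨split x.size z, ?_, (hz.isLeftGraft (isLeftGraft_over x y)).over_split⟩
      have := hz.split x.size
      rw [split_over] at this
      exact Finset.mem_product.mpr ⟨mem_Iic.mpr this.1, mem_Iic.mpr this.2⟩
    · rintro ⟨p, hp, rfl⟩
      obtain ⟨hu, hv⟩ := Finset.mem_product.mp hp
      exact (mem_Iic.mp hu).over (mem_Iic.mp hv)
  have inj : Set.InjOn (fun p : PBT × PBT => p.1.over p.2) ↑(Iic x ×ˢ Iic y) := by
    intro p hp q hq hpq
    have hp₁ := (mem_Iic.mp (Finset.mem_product.mp hp).1).size_eq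
    have hq₁ := (mem_Iic.mp (Finset.mem_product.mp hq).1).size_eq
    have := congrArg (split x.size) hpq
    rwa [← hp₁, split_over, hp₁, ← hq₁, split_over] at this
  rw [overM, bilin_P_P, P_eq_sum_Iic, image_eq, Finset.sum_image inj]

end PBT

open PBT in
/-- For all planar binary trees `x, y` : `P_{x∖y} = P_x * P_y` and
`P_{x/y} = P_x / P_y` in `ℤY`. -/
theorem P_basis_products (x y : PBT) :
    P (x.under y) = starM (P x) (P y) ∧ P (x.over y) = overM (P x) (P y) :=
  ⟨P_under x y, P_over x y⟩
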